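/- arXiv:2201.12238 — 4 statements merged into one kernel-verified Lean document; each statement's English description precedes it below -/
import Mathlib

section
/- For every positive integer m, q(m) ≥ p(m), where p(m) and q(m) count ±1-step paths of length m bounded in [-1,2] starting at height 2 and height 1 respectively. -/
/-- Height of a ±1-step path after `i` steps, starting at `a`, with steps given by `st`
(`true` = up, `false` = down). -/
def hgt (m : ℕ) (a : ℤ) (st : Fin m → Bool) (i : ℕ) : ℤ :=
  a + ∑ j ∈ Finset.univ.filter (fun j : Fin m => (j : ℕ) < i), (if st j then (1 : ℤ) else -1)

/-- Number of ±1-step paths of length `m` starting at height `a` whose heights all stay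
in the interval `[-1, 2]`. -/
noncomputable def pathCount (a : ℤ) (m : ℕ) : ℕ :=
  Nat.card {st : Fin m → Bool // ∀ i : ℕ, i ≤ m → -1 ≤ hgt m a st i ∧ hgt m a st i ≤ 2}

lemma hgt_zero (m : ℕ) (a : ℤ) (st : Fin m → Bool) : hgt m a st 0 = a := by
  simp [hgt]

lemma hgt_succ (m : ℕ) (a : ℤ) (st : Fin m → Bool) (i : ℕ) (hi : i < m) :
    hgt m a st (i+1) = hgt m a st i + (if st ⟨i, hi⟩ then (1:ℤ) else -1) := by
  unfold hgt
  rw [add_assoc]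
  congr 1
  have hins : Finset.univ.filter (fun j : Fin m => (j : ℕ) < i + 1)
      = insert (⟨i, hi⟩ : Fin m) (Finset.univ.filter (fun j : Fin m => (j : ℕ) < i)) := by
    ext j
    simp only [Finset.mem_filter, Finset.mem_univ, true_and, Finset.mem_insert, Fin.ext_iff]
    omega
  rw [hins, Finset.sum_insert (by simp)]
  ring

/-- A valid path from 2 must start with a down step. -/
lemma first_step_false (m : ℕ) (hm : 0 < m) (st : Fin m → Bool)
    (h : ∀ i : ℕ, i ≤ m → -1 ≤ hgt m 2 st i ∧ hgt m 2 st i ≤ 2) :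
    st ⟨0, hm⟩ = false := by
  have h1 := (h 1 hm).2
  rw [hgt_succ m 2 st 0 hm, hgt_zero] at h1
  by_contra hb
  simp only [Bool.not_eq_false] at hb
  rw [hb] at h1
  norm_num at h1

/-- `q(m) ≥ p(m)` for every positive `m`. -/
theorem pathCount_two_le_pathCount_one :
    ∀ m : ℕ, 0 < m → pathCount 2 m ≤ pathCount 1 m := by
  intro m hm
  unfold pathCount
  -- the shift map
  set G : (Fin m → Bool) → (Fin m → Bool) := fun st i =>
    if h : (i : ℕ) + 1 < m then st ⟨(i : ℕ) + 1, h⟩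
    else decide (hgt m 2 st m ≤ 1) with hG
  have key : ∀ st : Fin m → Bool, st ⟨0, hm⟩ = false →
      ∀ i : ℕ, i + 1 ≤ m → hgt m 1 (G st) i = hgt m 2 st (i + 1) := by
    intro st h0
    intro i
    induction i with
    | zero =>
      intro h1
      rw [hgt_zero, hgt_succ m 2 st 0 hm, hgt_zero, h0]
      norm_num
    | succ k ih =>
      intro hk
      have hk1 : k + 1 ≤ m := by omega
      have hkm : k < m := by omega
      have hk2 : k + 1 < m := by omega
      rw [hgt_succ m 1 (G st) k hkm, ih hk1, hgt_succ m 2 st (k+1) hk2]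
      congr 2
      simp only [hG]
      rw [dif_pos]
      exact hk2
  have valid : ∀ st : Fin m → Bool,
      (∀ i : ℕ, i ≤ m → -1 ≤ hgt m 2 st i ∧ hgt m 2 st i ≤ 2) →
      ∀ i : ℕ, i ≤ m → -1 ≤ hgt m 1 (G st) i ∧ hgt m 1 (G st) i ≤ 2 := by
    intro st hst i hi
    have h0 := first_step_false m hm st hst
    rcases Nat.lt_or_ge i m with hlt | hge
    · rw [key st h0 i hlt]
      exact hst (i+1) hlt
    · have him : i = m := le_antisymm hi hge
      have hm1 : (m - 1) + 1 = m := by omega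
      have hm1lt : m - 1 < m := by omega
      have step := hgt_succ m 1 (G st) (m-1) hm1lt
      rw [hm1, key st h0 (m-1) (by omega), hm1] at step
      rw [him, step]
      have hlast : (G st) ⟨m - 1, hm1lt⟩ = decide (hgt m 2 st m ≤ 1) := by
        simp only [hG]
        rw [dif_neg (by omega)]
      rw [hlast]
      have hb := hst m le_rfl
      by_cases hc : hgt m 2 st m ≤ 1
      · simp [hc]; omega
      · simp [hc]; omega
  set F : {st : Fin m → Bool // ∀ i : ℕ, i ≤ m → -1 ≤ hgt m 2 st i ∧ hgt m 2 st i ≤ 2} →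
      {st : Fin m → Bool // ∀ i : ℕ, i ≤ m → -1 ≤ hgt m 1 st i ∧ hgt m 1 st i ≤ 2} :=
    fun st => ⟨G st.1, valid st.1 st.2⟩ with hF
  have hinj : Function.Injective F := by
    intro a b hab
    have hGab : G a.1 = G b.1 := congrArg Subtype.val hab
    ext j
    rcases Nat.eq_zero_or_pos (j : ℕ) with hj0 | hjpos
    · have hja : (j : Fin m) = ⟨0, hm⟩ := by ext; exact hj0
      rw [hja, first_step_false m hm a.1 a.2, first_step_false m hm b.1 b.2]
    · have hjm : (j : ℕ) - 1 + 1 < m := by omega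
      have ha : a.1 j = G a.1 ⟨(j:ℕ) - 1, by omega⟩ := by
        simp only [hG]
        rw [dif_pos hjm]
        exact congrArg a.1 (Fin.ext (show (j:ℕ) = (j:ℕ)-1+1 by omega))
      have hb : b.1 j = G b.1 ⟨(j:ℕ) - 1, by omega⟩ := by
        simp only [hG]
        rw [dif_pos hjm]
        exact congrArg b.1 (Fin.ext (show (j:ℕ) = (j:ℕ)-1+1 by omega))
      rw [ha, hb, hGab]
  exact Nat.card_le_card_of_injective F hinj
end

section
/- A binary word x of length n satisfies dis(x) ≤ 3 (i.e., the gap between the maximum and minimum of its running digital sum sequence is at most 3) if and only if x is strongly (4,1)-locally balanced, i.e., for every even ℓ' ≥ 4 and every consecutive substring w of x of length ℓ', the Hamming weight of w satisfies ℓ'/2 - 1 ≤ wt(w) ≤ ℓ'/2 + 1. -/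
/-!
The running digital sum is a ±1 walk, and the weight `w` of the window of length `l` starting
at `i` is read off its increment: `s_{i+l} - s_i = 2w - l`. Hence `dis x ≤ 3` says that every
increment has absolute value at most 3, while `(l, 1)`-balance for even `l` says that the
increments over gaps `l` have absolute value at most 2. An increment over an even gap is even, so
the first bound gives the second; conversely, gaps below 4 are trivially bounded by 3, and an odd
gap `l ≥ 5` splits into one step and an even gap `l - 1 ≥ 4`, giving `1 + 2`.
-/

/-- Hamming weight of the substring of `x` of length `l` starting at (0-based) position `i`. -/
def subWt (n : ℕ) (x : Fin n → Bool) (i l : ℕ) : ℕ :=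
  (Finset.univ.filter (fun j : Fin n => i ≤ (j : ℕ) ∧ (j : ℕ) < i + l ∧ x j = true)).card

/-- `x` is `(l, δ)`-locally balanced: every consecutive substring of length `l` has weight
between `l/2 - δ` and `l/2 + δ`. -/
def locBal (l δ n : ℕ) (x : Fin n → Bool) : Prop :=
  ∀ i : ℕ, i + l ≤ n →
    (l : ℤ) / 2 - δ ≤ (subWt n x i l : ℤ) ∧ (subWt n x i l : ℤ) ≤ (l : ℤ) / 2 + δ

/-- Running digital sum: `s_i = 2·wt(x_1,…,x_i) − i`. -/
def rds (n : ℕ) (x : Fin n → Bool) (i : ℕ) : ℤ := 2 * (subWt n x 0 i : ℤ) - i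

/-- `dis x` = max of the RDS sequence minus its min. -/
def dis (n : ℕ) (x : Fin n → Bool) : ℤ :=
  Finset.sup' (Finset.range (n + 1)) Finset.nonempty_range_add_one (rds n x)
    - Finset.inf' (Finset.range (n + 1)) Finset.nonempty_range_add_one (rds n x)

/-- Number of `(6,1)`-locally balanced binary words of length `n`. -/
noncomputable def f (n : ℕ) : ℕ := Nat.card {x : Fin n → Bool // locBal 6 1 n x}

/-- `x` has the list `z` as a prefix. -/
def hasPrefix (n : ℕ) (x : Fin n → Bool) (z : List Bool) : Prop :=
  ∀ j : Fin z.length, ∃ h : (j : ℕ) < n, x ⟨j, h⟩ = z.get j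

/-- Number of `(6,1)`-locally balanced words of length `n` with prefix `z`. -/
noncomputable def fP (n : ℕ) (z : List Bool) : ℕ :=
  Nat.card {x : Fin n → Bool // locBal 6 1 n x ∧ hasPrefix n x z}

/-- Number of `(6,1)`-locally balanced words of length `n` whose first `s` entries have weight `t`. -/
noncomputable def fW (n s t : ℕ) : ℕ :=
  Nat.card {x : Fin n → Bool // locBal 6 1 n x ∧ subWt n x 0 s = t}

section RunningDigitalSum

variable {n : ℕ} (x : Fin n → Bool)

lemma subWt_le (i l : ℕ) : subWt n x i l ≤ l := by
  calc subWt n x i l ≤ (Finset.Ico i (i + l)).card := by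
        refine Finset.card_le_card_of_injOn Fin.val (fun j hj => ?_) Fin.val_injective.injOn
        simp only [Finset.coe_filter, Finset.mem_univ, true_and, Set.mem_ofPred_eq] at hj
        simpa using ⟨hj.1, hj.2.1⟩
    _ = l := by simp

lemma subWt_zero_add (i l : ℕ) : subWt n x 0 (i + l) = subWt n x 0 i + subWt n x i l := by
  unfold subWt
  rw [← Finset.card_union_of_disjoint]
  · congr 1
    ext j
    simp only [Finset.mem_union, Finset.mem_filter, Finset.mem_univ, true_and, zero_le]
    cases x j <;> simp only [and_true, and_false, or_false, Bool.false_eq_true]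
    omega
  · rw [Finset.disjoint_left]
    intro j h1 h2
    simp only [Finset.mem_filter, Finset.mem_univ, true_and] at h1 h2
    omega

lemma rds_add_sub (i l : ℕ) : rds n x (i + l) - rds n x i = 2 * (subWt n x i l : ℤ) - l := by
  simp only [rds, subWt_zero_add]
  push_cast
  ring

lemma abs_rds_add_sub_le (i l : ℕ) : |rds n x (i + l) - rds n x i| ≤ l := by
  have := subWt_le x i l
  rw [rds_add_sub, abs_le]
  omega

lemma locBal_iff_abs_rds_sub_le {l : ℕ} (hl : Even l) (δ : ℕ) :
    locBal l δ n x ↔ ∀ i, i + l ≤ n → |rds n x (i + l) - rds n x i| ≤ 2 * (δ : ℤ) := by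
  obtain ⟨m, rfl⟩ := hl
  refine forall₂_congr fun i _ => ?_
  rw [rds_add_sub, abs_le]
  push_cast
  omega

end RunningDigitalSum

lemma Finset.sup'_sub_inf'_le_iff {ι α : Type*} [AddCommGroup α] [LinearOrder α]
    [IsOrderedAddMonoid α] {s : Finset ι} (hs : s.Nonempty) (f : ι → α) (c : α) :
    s.sup' hs f - s.inf' hs f ≤ c ↔ ∀ i ∈ s, ∀ j ∈ s, f i - f j ≤ c := by
  simp only [sub_le_comm, Finset.le_inf'_iff, Finset.sup'_le_iff, sub_le_iff_le_add]
  exact forall₂_comm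

lemma dis_le_iff_abs_rds_sub_le {n : ℕ} (x : Fin n → Bool) (c : ℤ) :
    dis n x ≤ c ↔ ∀ i l, i + l ≤ n → |rds n x (i + l) - rds n x i| ≤ c := by
  rw [dis, Finset.sup'_sub_inf'_le_iff]
  simp only [Finset.mem_range]
  constructor
  · intro h i l hil
    exact abs_sub_le_iff.2 ⟨h _ (by omega) _ (by omega), h _ (by omega) _ (by omega)⟩
  · intro h a ha b hb
    rcases le_total a b with hab | hab
    · obtain ⟨l, rfl⟩ := Nat.exists_eq_add_of_le hab
      exact le_of_abs_le ((abs_sub_comm _ _).trans_le (h a l (by omega)))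
    · obtain ⟨l, rfl⟩ := Nat.exists_eq_add_of_le hab
      exact le_of_abs_le (h b l (by omega))

lemma abs_sub_le_three_of_even_gaps {g : ℕ → ℤ} {N : ℕ}
    (hstep : ∀ i l, |g (i + l) - g i| ≤ l)
    (heven : ∀ i l, Even l → 4 ≤ l → i + l ≤ N → |g (i + l) - g i| ≤ 2)
    {i l : ℕ} (hil : i + l ≤ N) : |g (i + l) - g i| ≤ 3 := by
  rcases lt_or_ge l 4 with hl | hl
  · exact (hstep i l).trans (by exact_mod_cast Nat.le_of_lt_succ hl)
  rcases Nat.even_or_odd l with he | ⟨m, rfl⟩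
  · exact (heven i l he hl hil).trans (by norm_num)
  have hfirst := hstep i 1
  have hrest := heven (i + 1) (2 * m) (even_two_mul m) (by omega) (by omega)
  rw [show i + 1 + 2 * m = i + (2 * m + 1) by ring] at hrest
  calc |g (i + (2 * m + 1)) - g i|
      ≤ |g (i + (2 * m + 1)) - g (i + 1)| + |g (i + 1) - g i| := abs_sub_le _ _ _
    _ ≤ 2 + 1 := add_le_add hrest (by exact_mod_cast hfirst)
    _ = 3 := by norm_num

/-- `dis x ≤ 3` iff `x` is strongly `(4,1)`-locally balanced. -/
theorem dis_le_three_iff_strongly_locally_balanced (n : ℕ) (x : Fin n → Bool) :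
    dis n x ≤ 3 ↔ ∀ l' : ℕ, Even l' → 4 ≤ l' → locBal l' 1 n x := by
  rw [dis_le_iff_abs_rds_sub_le]
  constructor
  · intro h l' hl' _
    rw [locBal_iff_abs_rds_sub_le x hl']
    intro i hil
    obtain ⟨m, rfl⟩ := hl'
    have hdiff := rds_add_sub x i (m + m)
    have h3 := abs_le.1 (h i _ hil)
    -- the increment `2w - 2m` is even, so the bound 3 improves to 2
    rw [abs_le]
    omega
  · intro H i l hil
    refine abs_sub_le_three_of_even_gaps (abs_rds_add_sub_le x) (fun i l hl h4 hil => ?_) hil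
    simpa using (locBal_iff_abs_rds_sub_le x hl 1).1 (H l hl h4) i hil
end

section
/- Let f_{n}(s,t) denote the number of (6,1)-locally balanced binary words of length n whose first s entries have Hamming weight t. Then f_{n+2}(5,2) = f_{n+1}(4,1) + f_{n+1}(4,2) and f_{n+2}(5,3) = f_{n+1}(4,2) + f_{n+1}(4,3). -/
/-! Deleting the first bit of a word counted by `f_{n+2}(5, w)` leaves a locally balanced word of
length `n + 1` whose first four bits have weight `w - 1` or `w`, according to the deleted bit.
Conversely, for `w ∈ {2, 3}` any bit may be put back: the new window of length 6 at the head has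
weight between `w` and `w + 1`, hence in `{2, 3, 4}`. -/

section SubWt

variable {n : ℕ}

lemma subWt_cons_succ (b : Bool) (y : Fin n → Bool) (i l : ℕ) :
    subWt (n + 1) (Fin.cons b y) (i + 1) l = subWt n y i l := by
  simp only [subWt, Finset.card_filter, Fin.sum_univ_succ, Fin.cons_zero, Fin.cons_succ,
    Fin.val_zero, Fin.val_succ]
  rw [if_neg fun h => absurd h.1 (by omega), zero_add]
  exact Finset.sum_congr rfl fun j _ =>
    if_congr (and_congr (by omega) (and_congr (by omega) Iff.rfl)) rfl rfl

lemma subWt_cons_zero_succ (b : Bool) (y : Fin n → Bool) (l : ℕ) :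
    subWt (n + 1) (Fin.cons b y) 0 (l + 1) = b.toNat + subWt n y 0 l := by
  simp only [subWt, Finset.card_filter, Fin.sum_univ_succ, Fin.cons_zero, Fin.cons_succ,
    Fin.val_zero, Fin.val_succ]
  congr 1
  · cases b <;> simp
  · exact Finset.sum_congr rfl fun j _ =>
      if_congr (and_congr (by omega) (and_congr (by omega) Iff.rfl)) rfl rfl

lemma subWt_mono (x : Fin n → Bool) (i : ℕ) {l l' : ℕ} (h : l ≤ l') :
    subWt n x i l ≤ subWt n x i l' :=
  Finset.card_le_card fun j => by
    simp only [Finset.mem_filter]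
    exact fun ⟨hj, hi, hl, hx⟩ => ⟨hj, hi, by omega, hx⟩

lemma subWt_succ_le (x : Fin n → Bool) (i l : ℕ) :
    subWt n x i (l + 1) ≤ subWt n x i l + 1 := by
  have hsplit : subWt n x i (l + 1) ≤ subWt n x i l
      + (Finset.univ.filter fun j : Fin n => (j : ℕ) = i + l).card := by
    refine (Finset.card_le_card fun j => ?_).trans (Finset.card_union_le _ _)
    simp only [Finset.mem_union, Finset.mem_filter, Finset.mem_univ, true_and]
    rintro ⟨hi, hl, hx⟩
    by_cases hj : (j : ℕ) = i + l
    · exact Or.inr hj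
    · exact Or.inl ⟨hi, by omega, hx⟩
  have hsingle : (Finset.univ.filter fun j : Fin n => (j : ℕ) = i + l).card ≤ 1 :=
    Finset.card_le_one.mpr fun a ha b hb => by simp_all [Fin.ext_iff]
  omega

end SubWt

lemma locBal_cons_iff {l δ n : ℕ} (b : Bool) (y : Fin n → Bool) :
    locBal l δ (n + 1) (Fin.cons b y) ↔ locBal l δ n y ∧
      (l ≤ n + 1 → (l : ℤ) / 2 - δ ≤ (subWt (n + 1) (Fin.cons b y) 0 l : ℤ) ∧
        (subWt (n + 1) (Fin.cons b y) 0 l : ℤ) ≤ (l : ℤ) / 2 + δ) := by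
  constructor
  · intro h
    refine ⟨fun i hi => ?_, fun hl => h 0 (by omega)⟩
    rw [← subWt_cons_succ b]
    exact h (i + 1) (by omega)
  · rintro ⟨hy, hhead⟩ (_ | i) hi
    · exact hhead (by omega)
    · rw [subWt_cons_succ]
      exact hy i (by omega)

lemma card_subtype_fin_cons_bool {n : ℕ} (P : (Fin (n + 1) → Bool) → Prop) :
    Nat.card {x // P x} =
      Nat.card {y : Fin n → Bool // P (Fin.cons false y)} +
        Nat.card {y : Fin n → Bool // P (Fin.cons true y)} := by
  let e := (Fin.consEquiv fun _ => Bool).symm.trans (Equiv.boolProdEquivSum (Fin n → Bool))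
  rw [← Nat.card_sum]
  exact Nat.card_congr <|
    (e.subtypeEquiv (q := fun c => P (e.symm c)) fun x => by simp).trans Equiv.subtypeSum

lemma locBal_cons_and_subWt_five_iff {n w : ℕ} (hw2 : 2 ≤ w) (hw3 : w ≤ 3) (b : Bool)
    (y : Fin (n + 1) → Bool) :
    (locBal 6 1 (n + 2) (Fin.cons b y) ∧ subWt (n + 2) (Fin.cons b y) 0 5 = w) ↔
      (locBal 6 1 (n + 1) y ∧ b.toNat + subWt (n + 1) y 0 4 = w) := by
  have hmono := subWt_mono y 0 (show 4 ≤ 5 by norm_num)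
  have hstep : subWt (n + 1) y 0 5 ≤ subWt (n + 1) y 0 4 + 1 := subWt_succ_le y 0 4
  rw [locBal_cons_iff, subWt_cons_zero_succ b y 4, subWt_cons_zero_succ b y 5]
  constructor
  · rintro ⟨⟨hy, -⟩, hw⟩
    exact ⟨hy, hw⟩
  · rintro ⟨hy, hw⟩
    refine ⟨⟨hy, fun _ => ?_⟩, hw⟩
    push_cast
    omega

lemma fW_five_eq_add {n w : ℕ} (hw2 : 2 ≤ w) (hw3 : w ≤ 3) :
    fW (n + 2) 5 w = fW (n + 1) 4 (w - 1) + fW (n + 1) 4 w := by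
  rw [fW, card_subtype_fin_cons_bool, add_comm]
  simp only [locBal_cons_and_subWt_five_iff hw2 hw3, Bool.toNat_false, Bool.toNat_true]
  congr 1 <;>
    exact Nat.card_congr (Equiv.subtypeEquivRight fun y => and_congr_right fun _ => by omega)

/-- `f_{n+2}(5,2) = f_{n+1}(4,1) + f_{n+1}(4,2)` and `f_{n+2}(5,3) = f_{n+1}(4,2) + f_{n+1}(4,3)`. -/
theorem fW_five_recurrence (n : ℕ) :
    fW (n + 2) 5 2 = fW (n + 1) 4 1 + fW (n + 1) 4 2 ∧
    fW (n + 2) 5 3 = fW (n + 1) 4 2 + fW (n + 1) 4 3 :=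
  ⟨fW_five_eq_add le_rfl (by norm_num), fW_five_eq_add (by norm_num) le_rfl⟩
end

section
/- The number of binary words x of length n with dis(x) ≤ 3 that can be produced by concatenating Dyck-path blocks of length m, where each block admits at least F_{m+1} choices regardless of starting layer, is at least F_{m+1}^{n/m} when m divides n. Concretely: for every k ≥ 1 and every s with 2^s ≤ F_{m+1}, there exists an injective map E from {0,1}^{sk} into the set of binary words y of length mk with dis(y) ≤ 3. -/
def okP : ℤ → List Bool → Prop
  | _, [] => True
  | v, b :: l => -1 ≤ v + (if b then 1 else -1) ∧ v + (if b then 1 else -1) ≤ 2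
      ∧ okP (v + (if b then 1 else -1)) l

def pth : ℕ → Bool → Finset (List Bool)
  | 0, _ => {[]}
  | 1, v => {[!v]}
  | n+2, v => ((pth (n+1) (!v)).image (fun l => (!v) :: l)) ∪
      ((pth n v).image (fun l => v :: (!v) :: l))

lemma pth_card : ∀ n v, (pth n v).card = Nat.fib (n+1)
  | 0, v => by simp [pth]
  | 1, v => by simp [pth]
  | n+2, v => by
    have hdisj : Disjoint ((pth (n+1) (!v)).image (fun l => (!v) :: l))
        ((pth n v).image (fun l => v :: (!v) :: l)) := by
      rw [Finset.disjoint_left]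
      rintro a ha hb
      simp only [Finset.mem_image] at ha hb
      obtain ⟨l1, -, rfl⟩ := ha
      obtain ⟨l2, -, h2⟩ := hb
      have := (List.cons.injEq _ _ _ _).mp h2
      exact (Bool.not_ne_self v) this.1.symm
    rw [pth, Finset.card_union_of_disjoint hdisj,
      Finset.card_image_of_injective _ (fun a b h => by simpa using h),
      Finset.card_image_of_injective _ (fun a b h => by simpa using h),
      pth_card (n+1) (!v), pth_card n v, Nat.add_comm, ← Nat.fib_add_two]

lemma pth_mem : ∀ n v, ∀ l ∈ pth n v, l.length = n ∧ okP (if v then 1 else 0) l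
  | 0, v => by intro l hl; simp [pth] at hl; subst hl; simp [okP]
  | 1, v => by
    intro l hl; simp [pth] at hl; subst hl
    cases v <;> simp [okP]
  | n+2, v => by
    intro l hl
    rw [pth] at hl
    simp only [Finset.mem_union, Finset.mem_image] at hl
    rcases hl with ⟨l', hl', rfl⟩ | ⟨l', hl', rfl⟩
    · obtain ⟨hlen, hok⟩ := pth_mem (n+1) (!v) l' hl'
      refine ⟨by simp [hlen], ?_⟩
      cases v <;> simp [okP] <;> simpa using hok
    · obtain ⟨hlen, hok⟩ := pth_mem n v l' hl'
      refine ⟨by simp [hlen], ?_⟩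
      cases v <;> simp [okP] <;> simpa using hok

lemma subWt_zero (n : ℕ) (x : Fin n → Bool) : subWt n x 0 0 = 0 := by
  simp [subWt]

lemma subWt_succ (n : ℕ) (x : Fin n → Bool) (i : ℕ) (h : i < n) :
    subWt n x 0 (i+1) = subWt n x 0 i + (if x ⟨i, h⟩ then 1 else 0) := by
  unfold subWt
  by_cases hx : x ⟨i, h⟩ = true
  · rw [hx, if_pos rfl]
    have hset : (Finset.univ.filter (fun j : Fin n => 0 ≤ (j:ℕ) ∧ (j:ℕ) < 0 + (i+1) ∧ x j = true))
        = insert ⟨i, h⟩ (Finset.univ.filter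
            (fun j : Fin n => 0 ≤ (j:ℕ) ∧ (j:ℕ) < 0 + i ∧ x j = true)) := by
      ext j
      simp only [Finset.mem_filter, Finset.mem_insert, Finset.mem_univ, true_and]
      constructor
      · rintro ⟨-, hj, hxj⟩
        by_cases hji : (j:ℕ) = i
        · exact Or.inl (Fin.ext hji)
        · exact Or.inr ⟨Nat.zero_le _, by omega, hxj⟩
      · rintro (rfl | ⟨-, hj, hxj⟩)
        · exact ⟨Nat.zero_le _, by simp, hx⟩
        · exact ⟨Nat.zero_le _, by omega, hxj⟩
    rw [hset, Finset.card_insert_of_notMem (by simp)]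
  · rw [if_neg hx, Nat.add_zero]
    have hset : (Finset.univ.filter (fun j : Fin n => 0 ≤ (j:ℕ) ∧ (j:ℕ) < 0 + (i+1) ∧ x j = true))
        = (Finset.univ.filter
            (fun j : Fin n => 0 ≤ (j:ℕ) ∧ (j:ℕ) < 0 + i ∧ x j = true)) := by
      ext j
      simp only [Finset.mem_filter, Finset.mem_univ, true_and]
      constructor
      · rintro ⟨-, hj, hxj⟩
        refine ⟨Nat.zero_le _, ?_, hxj⟩
        by_cases hji : (j:ℕ) = i
        · exact absurd (by rw [← Fin.ext hji (b := ⟨i,h⟩)]; exact hxj) hx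
        · omega
      · rintro ⟨-, hj, hxj⟩
        exact ⟨Nat.zero_le _, by omega, hxj⟩
    rw [hset]
    simp

lemma rds_zero (n : ℕ) (x : Fin n → Bool) : rds n x 0 = 0 := by
  simp [rds, subWt_zero]

lemma rds_succ (n : ℕ) (x : Fin n → Bool) (i : ℕ) (h : i < n) :
    rds n x (i+1) = rds n x i + (if x ⟨i, h⟩ then 1 else -1) := by
  unfold rds
  rw [subWt_succ n x i h]
  by_cases hx : x ⟨i, h⟩ = true <;> simp [hx] <;> ring

lemma good_of_okP (n : ℕ) (l : List Bool) (hl : l.length = n) (x : Fin n → Bool)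
    (hx : ∀ j : Fin n, x j = l.get ⟨j, hl ▸ j.2⟩) (h : okP 0 l) :
    ∀ i ≤ n, -1 ≤ rds n x i ∧ rds n x i ≤ 2 := by
  have key : ∀ i ≤ n, okP (rds n x i) (l.drop i) ∧ (-1 ≤ rds n x i ∧ rds n x i ≤ 2) := by
    intro i hi
    induction i with
    | zero => exact ⟨by simpa [rds_zero] using h, by simp [rds_zero]⟩
    | succ i ih =>
      have hin : i < n := by omega
      obtain ⟨hok, -⟩ := ih (by omega)
      have hdrop : l.drop i = l.get ⟨i, by omega⟩ :: l.drop (i+1) := by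
        rw [List.drop_eq_getElem_cons (by omega)]
        rfl
      rw [hdrop] at hok
      obtain ⟨h1, h2, h3⟩ := hok
      have hstep : rds n x (i+1) = rds n x i + (if l.get ⟨i, by omega⟩ then 1 else -1) := by
        rw [rds_succ n x i hin, hx ⟨i, hin⟩]
      rw [hstep]
      exact ⟨h3, h1, h2⟩
  exact fun i hi => (key i hi).2

lemma count_good (n : ℕ) [DecidablePred (fun x : Fin n → Bool =>
      ∀ i ≤ n, -1 ≤ rds n x i ∧ rds n x i ≤ 2)] :
    Nat.fib (n+1) ≤ Fintype.card {x : Fin n → Bool // ∀ i ≤ n, -1 ≤ rds n x i ∧ rds n x i ≤ 2} := by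
  rw [Fintype.card_subtype, ← pth_card n false]
  apply Finset.card_le_card_of_injOn (fun l => fun j : Fin n => l.getD j false)
  · intro l hl
    obtain ⟨hlen, hok⟩ := pth_mem n false l hl
    simp only [Finset.mem_coe, Finset.mem_filter, Finset.mem_univ, true_and]
    apply good_of_okP n l hlen
    · intro j
      show l.getD (↑j) false = _
      rw [List.getD_eq_getElem l false (by omega : (j:ℕ) < l.length), List.get_eq_getElem]
    · simpa using hok
  · intro l1 h1 l2 h2 heq
    obtain ⟨hlen1, -⟩ := pth_mem n false l1 (by simpa using h1)
    obtain ⟨hlen2, -⟩ := pth_mem n false l2 (by simpa using h2)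
    apply List.ext_getElem (by omega)
    intro i hi1 hi2
    have h3 : l1.getD i false = l2.getD i false := congrFun heq ⟨i, by omega⟩
    rwa [List.getD_eq_getElem l1 false hi1, List.getD_eq_getElem l2 false hi2] at h3

lemma fib_pow_le (m k : ℕ) : Nat.fib (m+1) ^ k ≤ Nat.fib (m*k+1) := by
  induction k with
  | zero => simp
  | succ k ih =>
    have h1 : Nat.fib (m+1) ^ (k+1) ≤ Nat.fib (m*k+1) * Nat.fib (m+1) := by
      rw [pow_succ]
      exact Nat.mul_le_mul_right _ ih
    refine h1.trans ?_
    have : m * (k+1) + 1 = m*k + m + 1 := by ring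
    rw [this, Nat.fib_add]
    exact Nat.le_add_left _ _

/-- For every `k ≥ 1` and `s` with `2^s ≤ F_{m+1}`, there is an injective encoding of
`{0,1}^{sk}` into the binary words of length `mk` with `dis ≤ 3`. -/
theorem exists_injective_encoding (m k s : ℕ) (hk : 1 ≤ k) (hs : 2 ^ s ≤ Nat.fib (m + 1)) :
    ∃ E : (Fin (s * k) → Bool) → (Fin (m * k) → Bool),
      Function.Injective E ∧ ∀ u, dis (m * k) (E u) ≤ 3 := by
  classical
  set n := m * k with hn
  have hcard : Fintype.card (Fin (s * k) → Bool)
      ≤ Fintype.card {x : Fin n → Bool // ∀ i ≤ n, -1 ≤ rds n x i ∧ rds n x i ≤ 2} := by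
    have h1 : Fintype.card (Fin (s * k) → Bool) = 2 ^ (s * k) := by
      simp [Fintype.card_fun]
    rw [h1, pow_mul]
    calc (2 ^ s) ^ k ≤ Nat.fib (m+1) ^ k := Nat.pow_le_pow_left hs k
      _ ≤ Nat.fib (m*k+1) := fib_pow_le m k
      _ ≤ _ := count_good n
  obtain ⟨e⟩ := Function.Embedding.nonempty_of_card_le hcard
  refine ⟨fun u => (e u).val, ?_, ?_⟩
  · intro u v huv
    exact e.injective (Subtype.ext huv)
  · intro u
    show dis n (e u).val ≤ 3
    have hx := (e u).2
    set x := (e u).val with hxdef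
    unfold dis
    have hsup : Finset.sup' (Finset.range (n + 1)) Finset.nonempty_range_add_one (rds n x) ≤ 2 := by
      apply Finset.sup'_le
      intro i hi
      exact (hx i (by simpa [Nat.lt_succ_iff] using hi)).2
    have hinf : (-1 : ℤ) ≤ Finset.inf' (Finset.range (n + 1)) Finset.nonempty_range_add_one (rds n x) := by
      apply Finset.le_inf'
      intro i hi
      exact (hx i (by simpa [Nat.lt_succ_iff] using hi)).1
    omega
end
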